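/- Let p and q be probability distributions over a random variable taking values in [0,1], with means p̄ and q̄. Then |p̄ − q̄| ≤ 8 √(Var(p) · D_H²(p,q)) + 20 D_H²(p,q), where D_H² is the squared Hellinger distance and Var(p) is the variance under p. -/

import Mathlib

/-!
Centre at the mean `m` of `p`: then `p̄ - q̄ = ∫ (x - m) (√p + √q) (√p - √q)`, and Cauchy–Schwarz
bounds it by `√(∫ (x - m)² (√p + √q)²) · √(2 D_H²)`. On `[0,1]` we have `(x - m)² ≤ 1`, and
`√q = √p - (√p - √q)` gives `(x - m)² (√p + √q)² ≤ 6 (x - m)² p + 4 (√p - √q)²`, so the first factor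
is at most `√(6 Var(p) + 8 D_H²)`; the rest is arithmetic.
-/

open MeasureTheory Real

variable {α : Type*} [MeasurableSpace α] {μ : Measure α}

theorem abs_integral_mul_le_sqrt_integral_sq_mul_sqrt_integral_sq {f g : α → ℝ}
    (hf : MemLp f 2 μ) (hg : MemLp g 2 μ) :
    |∫ x, f x * g x ∂μ| ≤ √(∫ x, f x ^ 2 ∂μ) * √(∫ x, g x ^ 2 ∂μ) := by
  have hnorm_rpow : ∀ (h : α → ℝ) x, ‖h x‖ ^ (2 : ℝ) = h x ^ 2 := fun h x => by
    rw [Real.rpow_two, Real.norm_eq_abs, sq_abs]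
  calc |∫ x, f x * g x ∂μ| ≤ ∫ x, ‖f x‖ * ‖g x‖ ∂μ := by
        rw [← norm_eq_abs]
        simpa only [norm_mul] using norm_integral_le_integral_norm (fun x => f x * g x)
    _ ≤ (∫ x, ‖f x‖ ^ (2 : ℝ) ∂μ) ^ (1 / (2 : ℝ)) * (∫ x, ‖g x‖ ^ (2 : ℝ) ∂μ) ^ (1 / (2 : ℝ)) :=
        integral_mul_norm_le_Lp_mul_Lq HolderConjugate.two_two (by simpa using hf)
          (by simpa using hg)
    _ = √(∫ x, f x ^ 2 ∂μ) * √(∫ x, g x ^ 2 ∂μ) := by simp only [hnorm_rpow, sqrt_eq_rpow]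

theorem integral_mul_mem_Icc {X p : α → ℝ} (hp0 : ∀ x, 0 ≤ p x) (hp1 : ∫ x, p x ∂μ = 1)
    (hX : ∀ x, X x ∉ Set.Icc (0 : ℝ) 1 → p x = 0) (hXp : Integrable (fun x => X x * p x) μ) :
    ∫ x, X x * p x ∂μ ∈ Set.Icc (0 : ℝ) 1 := by
  have hXp_mem : ∀ x, X x * p x ∈ Set.Icc 0 (p x) := fun x => by
    by_cases hx : X x ∈ Set.Icc (0 : ℝ) 1
    · exact ⟨mul_nonneg hx.1 (hp0 x), mul_le_of_le_one_left (hp0 x) hx.2⟩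
    · simp [hX x hx]
  refine ⟨integral_nonneg fun x => (hXp_mem x).1, hp1 ▸ integral_mono hXp ?_ fun x => (hXp_mem x).2⟩
  exact .of_integral_ne_zero (by simp [hp1])

theorem integral_mul_sub_integral_mul_eq_integral {X p q : α → ℝ} (m : ℝ)
    (hp0 : ∀ x, 0 ≤ p x) (hq0 : ∀ x, 0 ≤ q x) (hp : Integrable p μ) (hq : Integrable q μ)
    (hpq : ∫ x, p x ∂μ = ∫ x, q x ∂μ)
    (hXp : Integrable (fun x => X x * p x) μ) (hXq : Integrable (fun x => X x * q x) μ) :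
    ∫ x, X x * p x ∂μ - ∫ x, X x * q x ∂μ
      = ∫ x, (X x - m) * (√(p x) + √(q x)) * (√(p x) - √(q x)) ∂μ := by
  have hpointwise : ∀ x, (X x - m) * (√(p x) + √(q x)) * (√(p x) - √(q x))
      = (X x * p x - X x * q x) - (m * p x - m * q x) := fun x => by
    linear_combination (X x - m) * (sq_sqrt (hp0 x) - sq_sqrt (hq0 x))
  simp only [hpointwise]
  rw [integral_sub, integral_sub hXp hXq, integral_sub (hp.const_mul m) (hq.const_mul m),
    integral_const_mul, integral_const_mul, hpq, sub_self, sub_zero]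
  exacts [hXp.sub hXq, (hp.const_mul m).sub (hq.const_mul m)]

theorem sq_mul_sqrt_add_sqrt_le {p q c : ℝ} (hp : 0 ≤ p) (hc : q ≠ 0 → c ^ 2 ≤ 1) :
    (c * (√p + √q)) ^ 2 ≤ 6 * (c ^ 2 * p) + 4 * (√p - √q) ^ 2 := by
  by_cases hq : q = 0
  · subst hq
    rw [sqrt_zero, add_zero, sub_zero, mul_pow, sq_sqrt hp]
    nlinarith [mul_nonneg (sq_nonneg c) hp]
  · have hc1 := hc hq
    have hsum : (√p + √q) ^ 2 ≤ 6 * p + 4 * (√p - √q) ^ 2 := by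
      nlinarith [sq_sqrt hp, sq_nonneg (2 * √p - √q)]
    calc (c * (√p + √q)) ^ 2 = c ^ 2 * (√p + √q) ^ 2 := mul_pow _ _ _
      _ ≤ c ^ 2 * (6 * p + 4 * (√p - √q) ^ 2) := by gcongr
      _ ≤ 6 * (c ^ 2 * p) + 4 * (√p - √q) ^ 2 := by
        nlinarith [mul_le_mul_of_nonneg_right hc1 (sq_nonneg (√p - √q))]

section SecondMoment

variable {p q c : α → ℝ} (hp0 : ∀ x, 0 ≤ p x) (hc : ∀ x, q x ≠ 0 → c x ^ 2 ≤ 1)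
  (hcp : Integrable (fun x => c x ^ 2 * p x) μ)
  (hH : Integrable (fun x => (√(p x) - √(q x)) ^ 2) μ)
include hp0 hc hcp hH

theorem memLp_two_mul_sqrt_add_sqrt
    (hmeas : AEStronglyMeasurable (fun x => c x * (√(p x) + √(q x))) μ) :
    MemLp (fun x => c x * (√(p x) + √(q x))) 2 μ := by
  refine (memLp_two_iff_integrable_sq hmeas).2 <| Integrable.mono' ((hcp.const_mul 6).add
    (hH.const_mul 4)) (hmeas.pow 2) (.of_forall fun x => ?_)
  rw [norm_of_nonneg (sq_nonneg _)]
  exact sq_mul_sqrt_add_sqrt_le (hp0 x) (hc x)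

theorem integral_mul_sqrt_add_sqrt_sq_le
    (hmeas : AEStronglyMeasurable (fun x => c x * (√(p x) + √(q x))) μ) :
    ∫ x, (c x * (√(p x) + √(q x))) ^ 2 ∂μ
      ≤ 6 * ∫ x, c x ^ 2 * p x ∂μ + 4 * ∫ x, (√(p x) - √(q x)) ^ 2 ∂μ := by
  rw [← integral_const_mul, ← integral_const_mul, ← integral_add (hcp.const_mul 6)
    (hH.const_mul 4)]
  exact integral_mono (memLp_two_mul_sqrt_add_sqrt hp0 hc hcp hH hmeas).integrable_sq
    ((hcp.const_mul 6).add (hH.const_mul 4)) fun x => sq_mul_sqrt_add_sqrt_le (hp0 x) (hc x)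

end SecondMoment

theorem sqrt_six_mul_add_eight_mul_mul_sqrt_two_mul_le {V H : ℝ} (hV : 0 ≤ V) (hH : 0 ≤ H) :
    √(6 * V + 8 * H) * √(2 * H) ≤ 8 * √(V * H) + 20 * H := by
  rw [← sqrt_mul (by positivity), sqrt_le_iff]
  refine ⟨by positivity, ?_⟩
  nlinarith [sq_sqrt (mul_nonneg hV hH), sqrt_nonneg (V * H), mul_nonneg (sqrt_nonneg (V * H)) hH]

/-- Lemma 4.3 of Wang et al. 2024. Let `p` and `q` be probability
densities (w.r.t. a dominating measure `μ`) of distributions over a random variable with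
values in `[0,1]`, with means `p̄, q̄`. Then
`|p̄ − q̄| ≤ 8 √(Var(p) · D_H²(p,q)) + 20 D_H²(p,q)`,
where `D_H²(p,q) = (1/2)∫(√p − √q)² dμ` and `Var(p)` is the variance under `p`. -/
theorem mean_diff_le_second_order_hellinger
    (μ : Measure ℝ) (p q : ℝ → ℝ)
    (hpm : Measurable p) (hqm : Measurable q)
    (hp0 : ∀ x, 0 ≤ p x) (hq0 : ∀ x, 0 ≤ q x)
    (hp1 : ∫ x, p x ∂μ = 1) (hq1 : ∫ x, q x ∂μ = 1)
    (hpsupp : ∀ x, x ∉ Set.Icc (0:ℝ) 1 → p x = 0)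
    (hqsupp : ∀ x, x ∉ Set.Icc (0:ℝ) 1 → q x = 0)
    (hIp : Integrable (fun x => x * p x) μ) (hIq : Integrable (fun x => x * q x) μ)
    (hIvar : Integrable (fun x => (x - ∫ y, y * p y ∂μ) ^ 2 * p x) μ)
    (hIH : Integrable (fun x => (sqrt (p x) - sqrt (q x)) ^ 2) μ) :
    |(∫ x, x * p x ∂μ) - ∫ x, x * q x ∂μ|
      ≤ 8 * sqrt ((∫ x, (x - ∫ y, y * p y ∂μ) ^ 2 * p x ∂μ) *
            ((1 / 2) * ∫ x, (sqrt (p x) - sqrt (q x)) ^ 2 ∂μ))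
        + 20 * ((1 / 2) * ∫ x, (sqrt (p x) - sqrt (q x)) ^ 2 ∂μ) := by
  set m := ∫ y, y * p y ∂μ
  set V := ∫ x, (x - m) ^ 2 * p x ∂μ with hV
  set H := (1 / 2) * ∫ x, (√(p x) - √(q x)) ^ 2 ∂μ with hH
  have hm : m ∈ Set.Icc (0 : ℝ) 1 := integral_mul_mem_Icc (X := fun x => x) hp0 hp1 hpsupp hIp
  have hc : ∀ x, q x ≠ 0 → (x - m) ^ 2 ≤ 1 := fun x hqx => by
    have hx := not_imp_comm.1 (hqsupp x) hqx
    nlinarith [hx.1, hx.2, hm.1, hm.2]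
  have hmeas : AEStronglyMeasurable (fun x => (x - m) * (√(p x) + √(q x))) μ := by
    fun_prop
  have hmean := integral_mul_sub_integral_mul_eq_integral (X := fun x => x) m hp0 hq0
    (.of_integral_ne_zero (by simp [hp1])) (.of_integral_ne_zero (by simp [hq1]))
    (hp1.trans hq1.symm) hIp hIq
  have hsecond := integral_mul_sqrt_add_sqrt_sq_le hp0 hc hIvar hIH hmeas
  rw [hmean]
  calc _ ≤ √(∫ x, ((x - m) * (√(p x) + √(q x))) ^ 2 ∂μ) * √(∫ x, (√(p x) - √(q x)) ^ 2 ∂μ) :=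
        abs_integral_mul_le_sqrt_integral_sq_mul_sqrt_integral_sq
          (memLp_two_mul_sqrt_add_sqrt hp0 hc hIvar hIH hmeas)
          ((memLp_two_iff_integrable_sq (by fun_prop)).2 hIH)
    _ ≤ √(6 * V + 8 * H) * √(2 * H) := by
        gcongr <;> linarith
    _ ≤ 8 * √(V * H) + 20 * H := sqrt_six_mul_add_eight_mul_mul_sqrt_two_mul_le
        (integral_nonneg fun x => mul_nonneg (sq_nonneg _) (hp0 x))
        (mul_nonneg (by norm_num) (integral_nonneg fun x => sq_nonneg _))
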